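/- arXiv:1301.2000 — 4 statements merged into one kernel-verified Lean document; each statement's English description precedes it below -/
import Mathlib

section
/- Let A be a real p-Banach algebra with unit such that ‖a‖^(1/p) ≤ m·r(a) for all a ∈ A, where m > 0 is a constant and r denotes the spectral radius. Then for every nonzero ℝ-linear multiplicative map x : A → ℍ into the quaternions and every a ∈ A, one has |x(a)| ≤ ‖a‖^(1/p), where |·| is the usual norm on ℍ. -/
open scoped Quaternion

/-- The spectrum of an element of a unital real algebra:
Sp(a) = {s+it ∈ ℂ : (a − s·1)² + t²·1 is not invertible in A}. -/
def realSpectrum {A : Type*} [Ring A] [Algebra ℝ A] (a : A) : Set ℂ :=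
  {z : ℂ | ¬ IsUnit ((a - algebraMap ℝ A z.re) ^ 2 + algebraMap ℝ A (z.im ^ 2))}

/-- The spectral radius r(a) = sup{|λ| : λ ∈ Sp(a)}. -/
noncomputable def realSpectralRadius {A : Type*} [Ring A] [Algebra ℝ A] (a : A) : ℝ :=
  sSup {x : ℝ | ∃ z ∈ realSpectrum a, x = ‖z‖}


open Filter Topology Finset

/-!
A character `φ : A → ℍ` sends the element `(2 Re q)·b − b²` (with `q = φ b`) to `|q|²`, since
every quaternion is a root of its real characteristic polynomial `X² − 2 Re q X + |q|²`.
Hence `|q|² − ((2 Re q)·b − b²)` is not invertible, while a Neumann series shows that it would be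
invertible if `‖(2 Re q)·b − b²‖ < |q|^{2p}`. Comparing gives `|φ b|^p ≤ (2^p + 1)‖b‖`, and applying
this to `bⁿ` and letting `n → ∞` removes the constant.
-/

theorem le_of_forall_pow_le_mul_pow {s t C : ℝ} (hs : 0 ≤ s) (h : ∀ n : ℕ, t ^ n ≤ C * s ^ n) :
    t ≤ s := by
  by_contra! hst
  rcases hs.eq_or_lt with rfl | hs
  · linarith [h 1]
  · obtain ⟨n, hn⟩ := pow_unbounded_of_one_lt C ((one_lt_div hs).2 hst)
    rw [div_pow, lt_div_iff₀ (pow_pos hs n)] at hn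
    linarith [h n]

theorem LinearMap.map_one_of_map_mul {R A B : Type*} [Semiring R] [Semiring A] [Module R A]
    [Semiring B] [Module R B] [IsLeftCancelMulZero B] (f : A →ₗ[R] B)
    (hf : ∀ a b, f (a * b) = f a * f b) (hf0 : f ≠ 0) : f 1 = 1 := by
  obtain ⟨a, ha⟩ := DFunLike.ne_iff.1 hf0
  exact mul_left_cancel₀ ha (by rw [← hf, mul_one, mul_one])

theorem Quaternion.two_re_smul_sub_mul_self {R : Type*} [CommRing R] (q : ℍ[R]) :
    (2 * q.re) • q - q * q = algebraMap R ℍ[R] (normSq q) := by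
  rw [algebraMap_def, ← star_mul_self, star_eq_two_re_sub, sub_mul, Algebra.smul_def,
    algebraMap_def]

theorem Quaternion.abs_re_le_norm (q : ℍ[ℝ]) : |q.re| ≤ ‖q‖ := by
  refine abs_le_of_sq_le_sq ?_ (norm_nonneg q)
  rw [sq ‖q‖, ← normSq_eq_norm_mul_self, normSq_def']
  nlinarith [sq_nonneg q.imI, sq_nonneg q.imJ, sq_nonneg q.imK]

structure IsPNorm {A : Type*} [Ring A] [Module ℝ A] [Dist A] (p : ℝ) (nrm : A → ℝ) : Prop where
  add_le : ∀ a b : A, nrm (a + b) ≤ nrm a + nrm b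
  smul : ∀ (α : ℝ) (a : A), nrm (α • a) = |α| ^ p * nrm a
  mul_le : ∀ a b : A, nrm (a * b) ≤ nrm a * nrm b
  dist_eq : ∀ a b : A, dist a b = nrm (a - b)

namespace IsPNorm

section Module

variable {A : Type*} [Ring A] [Module ℝ A] [MetricSpace A] {p : ℝ} {nrm : A → ℝ}

theorem nonneg (hN : IsPNorm p nrm) (a : A) : 0 ≤ nrm a := by
  simpa [hN.dist_eq] using dist_nonneg (x := a) (y := 0)

theorem neg (hN : IsPNorm p nrm) (a : A) : nrm (-a) = nrm a := by
  simpa using hN.smul (-1) a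

theorem sub_le (hN : IsPNorm p nrm) (a b : A) : nrm (a - b) ≤ nrm a + nrm b := by
  simpa only [sub_eq_add_neg, hN.neg] using hN.add_le a (-b)

theorem pow_le (hN : IsPNorm p nrm) (a : A) (n : ℕ) : nrm (a ^ n) ≤ nrm 1 * nrm a ^ n := by
  induction n with
  | zero => simp
  | succ n ih =>
    calc nrm (a ^ (n + 1)) ≤ nrm (a ^ n) * nrm a := pow_succ a n ▸ hN.mul_le _ _
      _ ≤ nrm 1 * nrm a ^ n * nrm a := by gcongr; exact hN.nonneg a
      _ = nrm 1 * nrm a ^ (n + 1) := by ring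

theorem tendsto_mul_const {ι : Type*} {l : Filter ι} {f : ι → A} {a : A} (hN : IsPNorm p nrm)
    (hf : Tendsto f l (𝓝 a)) (c : A) : Tendsto (fun i ↦ f i * c) l (𝓝 (a * c)) := by
  refine tendsto_iff_dist_tendsto_zero.2 (squeeze_zero (fun _ ↦ dist_nonneg) (fun i ↦ ?_)
    (by simpa using (tendsto_iff_dist_tendsto_zero.1 hf).mul_const (nrm c)))
  rw [hN.dist_eq, hN.dist_eq, ← sub_mul]
  exact hN.mul_le _ _

theorem tendsto_const_mul {ι : Type*} {l : Filter ι} {f : ι → A} {a : A} (hN : IsPNorm p nrm)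
    (hf : Tendsto f l (𝓝 a)) (c : A) : Tendsto (fun i ↦ c * f i) l (𝓝 (c * a)) := by
  refine tendsto_iff_dist_tendsto_zero.2 (squeeze_zero (fun _ ↦ dist_nonneg) (fun i ↦ ?_)
    (by simpa using (tendsto_iff_dist_tendsto_zero.1 hf).const_mul (nrm c)))
  rw [hN.dist_eq, hN.dist_eq, ← mul_sub]
  exact hN.mul_le _ _

theorem tendsto_one_sub_pow (hN : IsPNorm p nrm) {c : A} (hc : nrm c < 1) :
    Tendsto (fun n : ℕ ↦ 1 - c ^ n) atTop (𝓝 1) := by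
  refine tendsto_iff_dist_tendsto_zero.2 (squeeze_zero (fun _ ↦ dist_nonneg) (fun n ↦ ?_)
    (by simpa using (tendsto_pow_atTop_nhds_zero_of_lt_one (hN.nonneg c) hc).const_mul (nrm 1)))
  rw [hN.dist_eq, sub_sub_cancel_left, hN.neg]
  exact hN.pow_le c n

theorem cauchySeq_geom_sum (hN : IsPNorm p nrm) {c : A} (hc : nrm c < 1) :
    CauchySeq (fun n ↦ ∑ k ∈ range n, c ^ k) := by
  refine cauchySeq_of_le_geometric (nrm c) (nrm 1) hc fun n ↦ ?_
  rw [hN.dist_eq, sum_range_succ, sub_add_cancel_left, hN.neg]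
  exact hN.pow_le c n

theorem isUnit_one_sub [CompleteSpace A] (hN : IsPNorm p nrm) {c : A} (hc : nrm c < 1) :
    IsUnit (1 - c) := by
  obtain ⟨s, hs⟩ := cauchySeq_tendsto_of_complete (hN.cauchySeq_geom_sum hc)
  refine isUnit_iff_exists.2 ⟨s, ?_, ?_⟩
  · refine tendsto_nhds_unique ?_ (hN.tendsto_one_sub_pow hc)
    simpa only [mul_neg_geom_sum] using hN.tendsto_const_mul hs (1 - c)
  · refine tendsto_nhds_unique ?_ (hN.tendsto_one_sub_pow hc)
    simpa only [geom_sum_mul_neg] using hN.tendsto_mul_const hs (1 - c)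

end Module

section Algebra

variable {A : Type*} [Ring A] [Algebra ℝ A] [MetricSpace A] [CompleteSpace A] {p : ℝ}
  {nrm : A → ℝ}

theorem isUnit_algebraMap_sub (hN : IsPNorm p nrm) {R : ℝ} (hR : 0 < R) {d : A}
    (hd : nrm d < R ^ p) : IsUnit (algebraMap ℝ A R - d) := by
  have hfactor : algebraMap ℝ A R - d = algebraMap ℝ A R * (1 - R⁻¹ • d) := by
    rw [mul_sub, mul_one, ← Algebra.smul_def, smul_inv_smul₀ hR.ne']
  have hsmall : nrm (R⁻¹ • d) < 1 := by
    rw [hN.smul, abs_of_pos (inv_pos.2 hR), Real.inv_rpow hR.le, inv_mul_lt_one₀ (by positivity)]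
    exact hd
  exact hfactor ▸ ((isUnit_iff_ne_zero.2 hR.ne').map _).mul (hN.isUnit_one_sub hsmall)

theorem norm_rpow_le (hN : IsPNorm p nrm) (hp : 0 < p) (φ : A →ₐ[ℝ] ℍ[ℝ]) (b : A) :
    ‖φ b‖ ^ p ≤ (2 ^ p + 1) * nrm b := by
  set q := φ b
  rcases eq_or_ne q 0 with hq | hq
  · rw [hq, norm_zero, Real.zero_rpow hp.ne']
    exact mul_nonneg (by positivity) (hN.nonneg b)
  have hR : 0 < Quaternion.normSq q := by
    rw [Quaternion.normSq_eq_norm_mul_self]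
    exact mul_self_pos.2 (norm_ne_zero_iff.2 hq)
  have hnotUnit : ¬ IsUnit (algebraMap ℝ A (Quaternion.normSq q) - ((2 * q.re) • b - b * b)) :=
    fun hu ↦ by simpa [q, Quaternion.two_re_smul_sub_mul_self] using hu.map φ
  have hlower : ‖q‖ ^ p * ‖q‖ ^ p ≤ nrm ((2 * q.re) • b - b * b) := by
    rw [← Real.mul_rpow (norm_nonneg q) (norm_nonneg q), ← Quaternion.normSq_eq_norm_mul_self]
    exact not_lt.1 (mt (hN.isUnit_algebraMap_sub hR) hnotUnit)
  have hre : |2 * q.re| ^ p ≤ 2 ^ p * ‖q‖ ^ p := by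
    rw [abs_mul, abs_two, Real.mul_rpow zero_le_two (abs_nonneg _)]
    gcongr
    exact Quaternion.abs_re_le_norm q
  have hupper : nrm ((2 * q.re) • b - b * b) ≤ 2 ^ p * ‖q‖ ^ p * nrm b + nrm b * nrm b :=
    calc nrm ((2 * q.re) • b - b * b) ≤ |2 * q.re| ^ p * nrm b + nrm b * nrm b := by
          rw [← hN.smul]
          exact (hN.sub_le _ _).trans (add_le_add_right (hN.mul_le b b) _)
      _ ≤ 2 ^ p * ‖q‖ ^ p * nrm b + nrm b * nrm b := by gcongr; exact hN.nonneg b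
  have hK : 0 < ‖q‖ ^ p := Real.rpow_pos_of_pos (norm_pos_iff.2 hq) p
  have hb := hN.nonneg b
  by_contra! hlt
  have hbq : nrm b ≤ ‖q‖ ^ p := by nlinarith [Real.rpow_nonneg zero_le_two p]
  nlinarith [mul_lt_mul_of_pos_right hlt hK, mul_le_mul_of_nonneg_left hbq hb]

theorem norm_rpow_le_self (hN : IsPNorm p nrm) (hp : 0 < p) (φ : A →ₐ[ℝ] ℍ[ℝ]) (a : A) :
    ‖φ a‖ ^ p ≤ nrm a :=
  le_of_forall_pow_le_mul_pow (hN.nonneg a) fun n ↦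
    calc (‖φ a‖ ^ p) ^ n = ‖φ (a ^ n)‖ ^ p := by
          rw [map_pow, norm_pow, Real.rpow_pow_comm (norm_nonneg _)]
      _ ≤ (2 ^ p + 1) * nrm (a ^ n) := hN.norm_rpow_le hp φ _
      _ ≤ (2 ^ p + 1) * (nrm 1 * nrm a ^ n) := by gcongr; exact hN.pow_le a n
      _ = (2 ^ p + 1) * nrm 1 * nrm a ^ n := by ring

end Algebra

end IsPNorm

theorem stmt4_general {A : Type*} [Ring A] [Algebra ℝ A] [MetricSpace A] [CompleteSpace A]
    {p : ℝ} (hp0 : 0 < p)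
    (nrm : A → ℝ)
    (h_add : ∀ a b : A, nrm (a + b) ≤ nrm a + nrm b)
    (h_smul : ∀ (α : ℝ) (a : A), nrm (α • a) = |α| ^ p * nrm a)
    (h_mul : ∀ a b : A, nrm (a * b) ≤ nrm a * nrm b)
    (h_dist : ∀ a b : A, dist a b = nrm (a - b)) :
    ∀ x : A →ₗ[ℝ] ℍ[ℝ], (∀ b c : A, x (b * c) = x b * x c) → x ≠ 0 →
      ∀ a : A, ‖x a‖ ≤ nrm a ^ (1 / p) := by
  intro x hx hx0 a
  have hN : IsPNorm p nrm := ⟨h_add, h_smul, h_mul, h_dist⟩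
  let φ : A →ₐ[ℝ] ℍ[ℝ] := AlgHom.ofLinearMap x (x.map_one_of_map_mul hx hx0) hx
  rw [one_div, Real.le_rpow_inv_iff_of_pos (norm_nonneg _) (hN.nonneg a) hp0]
  exact hN.norm_rpow_le_self hp0 φ a

/-- |x(a)| ≤ ‖a‖^(1/p) for every nonzero ℝ-linear multiplicative x : A → ℍ. -/
theorem stmt4 {A : Type*} [Ring A] [Algebra ℝ A] [MetricSpace A] [CompleteSpace A]
    {p : ℝ} (hp0 : 0 < p) (hp1 : p ≤ 1)
    (nrm : A → ℝ)
    (h_add : ∀ a b : A, nrm (a + b) ≤ nrm a + nrm b)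
    (h_smul : ∀ (α : ℝ) (a : A), nrm (α • a) = |α| ^ p * nrm a)
    (h_mul : ∀ a b : A, nrm (a * b) ≤ nrm a * nrm b)
    (h_zero : ∀ a : A, nrm a = 0 → a = 0)
    (h_dist : ∀ a b : A, dist a b = nrm (a - b))
    {m : ℝ} (hm : 0 < m)
    (h_spec : ∀ a : A, nrm a ^ (1 / p) ≤ m * realSpectralRadius a) :
    ∀ x : A →ₗ[ℝ] ℍ[ℝ], (∀ b c : A, x (b * c) = x b * x c) → x ≠ 0 →
      ∀ a : A, ‖x a‖ ≤ nrm a ^ (1 / p) :=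
  stmt4_general hp0 nrm h_add h_smul h_mul h_dist
end

section
/- Let A be a real p-Banach algebra with unit such that ‖a‖^(1/p) ≤ m·r(a) for all a ∈ A, where m > 0 is a constant and r denotes the spectral radius. Then the spectral radius satisfies r(ab) ≤ m²·r(a)·r(b) for all a, b ∈ A. -/
/-
For `z` in the spectrum of `a`, `(a - Re z)² + (Im z)² = ‖z‖²·1 - ((2 Re z)•a - a²)` is not
invertible, so by the Neumann series `‖z‖^(2p) ≤ 2^p ‖z‖^p ‖a‖ + ‖a‖²`, whence
`‖z‖^p ≤ (2^p + 1)‖a‖`. Since `zⁿ` lies in the spectrum of `aⁿ` and `‖aⁿ‖ ≤ ‖a‖ⁿ`, taking `n`-th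
roots removes the constant: `r(a) ≤ ‖a‖^(1/p)`. Then
`r(ab) ≤ ‖ab‖^(1/p) ≤ ‖a‖^(1/p) ‖b‖^(1/p) ≤ m² r(a) r(b)`.
-/

open scoped Quaternion

open Polynomial

lemma le_of_forall_pow_le_mul_pow_s10 {B N C : ℝ} (hB : 0 ≤ B) (hN : 0 ≤ N)
    (h : ∀ n : ℕ, 0 < n → B ^ n ≤ C * N ^ n) : B ≤ N := by
  by_contra! hNB
  have hB0 : 0 < B := hN.trans_lt hNB
  have hsmall : ∀ᶠ n : ℕ in Filter.atTop, C * (N / B) ^ n < 1 := by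
    have := (tendsto_pow_atTop_nhds_zero_of_lt_one (div_nonneg hN hB)
      ((div_lt_one hB0).2 hNB)).const_mul C
    rw [mul_zero] at this
    exact this.eventually_lt_const one_pos
  obtain ⟨n, hn, hn0⟩ := (hsmall.and (Filter.eventually_gt_atTop 0)).exists
  have : B ^ n ≤ C * (N / B) ^ n * B ^ n := by
    rw [div_pow, mul_assoc, div_mul_cancel₀ _ (pow_pos hB0 n).ne']
    exact h n hn0
  nlinarith [pow_pos hB0 n]

lemma Polynomial.isUnit_aeval_of_dvd {R A : Type*} [CommSemiring R] [Semiring A] [Algebra R A]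
    {a : A} {p q : R[X]} (hpq : p ∣ q) (hq : IsUnit (aeval a q)) : IsUnit (aeval a p) := by
  obtain ⟨r, rfl⟩ := hpq
  rw [map_mul] at hq
  exact ((((Commute.all p r).map (aeval a)).isUnit_mul_iff).mp hq).1

namespace RealSpectrum

noncomputable def quadratic (z : ℂ) : ℝ[X] := (X - C z.re) ^ 2 + C (z.im ^ 2)

lemma map_quadratic (z : ℂ) :
    (quadratic z).map (algebraMap ℝ ℂ) = (X - C (starRingEnd ℂ z)) * (X - C z) := by
  have hsum : C z + C (starRingEnd ℂ z) = C (2 * z.re : ℂ) := by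
    rw [← C_add, Complex.add_conj]; push_cast; rfl
  have hprod : C z * C (starRingEnd ℂ z) = C ((z.re : ℂ) ^ 2 + (z.im : ℂ) ^ 2) := by
    rw [← C_mul, Complex.mul_conj, Complex.normSq_apply]; push_cast; ring_nf
  simp only [quadratic, Polynomial.map_add, Polynomial.map_pow, Polynomial.map_sub, map_X, map_C,
    Complex.coe_algebraMap, C_add, C_mul, C_pow, map_ofNat] at hsum hprod ⊢
  linear_combination X * hsum - hprod

lemma quadratic_dvd_comp_X_pow (z : ℂ) (n : ℕ) : quadratic z ∣ (quadratic (z ^ n)).comp (X ^ n) := by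
  rw [← map_dvd_map' (algebraMap ℝ ℂ), map_comp, map_quadratic, map_quadratic]
  simp only [mul_comp, sub_comp, X_comp, Polynomial.map_pow, map_X, map_pow]
  exact mul_dvd_mul (by simpa using sub_dvd_pow_sub_pow X (C (starRingEnd ℂ z)) n)
    (by simpa using sub_dvd_pow_sub_pow X (C z) n)

section RealAlgebra

variable {A : Type*} [Ring A] [Algebra ℝ A]

lemma mem_realSpectrum_iff_aeval {a : A} {z : ℂ} :
    z ∈ realSpectrum a ↔ ¬ IsUnit (aeval a (quadratic z)) := by
  simp [realSpectrum, quadratic]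

lemma pow_mem_realSpectrum {a : A} {z : ℂ} (hz : z ∈ realSpectrum a) (n : ℕ) :
    z ^ n ∈ realSpectrum (a ^ n) := by
  rw [mem_realSpectrum_iff_aeval] at hz ⊢
  intro hn
  apply hz
  refine isUnit_aeval_of_dvd (quadratic_dvd_comp_X_pow z n) ?_
  simpa [aeval_comp] using hn

lemma sq_sub_algebraMap_add_algebraMap (a : A) (s t : ℝ) :
    (a - algebraMap ℝ A s) ^ 2 + algebraMap ℝ A (t ^ 2)
      = algebraMap ℝ A (s ^ 2 + t ^ 2) - ((2 * s) • a - a * a) := by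
  simp only [Algebra.algebraMap_eq_smul_one, sq, sub_mul, mul_sub, mul_smul_one,
    smul_mul_assoc, one_mul]
  module

end RealAlgebra

section PNormed

variable {A : Type*} [NormedRing A] [Algebra ℝ A] {p : ℝ}

lemma isUnit_algebraMap_sub [HasSummableGeomSeries A] {r : ℝ} (hr : r ≠ 0) {w : A}
    (hw : ‖r⁻¹ • w‖ < 1) : IsUnit (algebraMap ℝ A r - w) := by
  have : algebraMap ℝ A r - w = algebraMap ℝ A r * (1 - r⁻¹ • w) := by
    rw [mul_sub, mul_one, ← Algebra.smul_def, smul_smul, mul_inv_cancel₀ hr, one_smul]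
  rw [this]
  exact ((IsUnit.mk0 r hr).map (algebraMap ℝ A)).mul (isUnit_one_sub_of_norm_lt_one hw)

variable [CompleteSpace A] (hp : 0 < p) (h_smul : ∀ (α : ℝ) (a : A), ‖α • a‖ = |α| ^ p * ‖a‖)
include hp h_smul

lemma norm_rpow_le_of_mem_realSpectrum {a : A} {z : ℂ} (hz : z ∈ realSpectrum a) :
    ‖z‖ ^ p ≤ (2 ^ p + 1) * ‖a‖ := by
  rcases eq_or_ne z 0 with rfl | hz0
  · rw [norm_zero, Real.zero_rpow hp.ne']
    positivity
  set R := ‖z‖ ^ p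
  set N := ‖a‖
  have hz_pos : 0 < ‖z‖ := norm_pos_iff.2 hz0
  have hR : 0 < R := by positivity
  have hN : 0 ≤ N := norm_nonneg a
  have hr : z.re ^ 2 + z.im ^ 2 = ‖z‖ ^ 2 := by
    rw [Complex.sq_norm, Complex.normSq_apply]; ring
  have hrp : (‖z‖ ^ 2) ^ p = R ^ 2 := (Real.rpow_pow_comm (norm_nonneg z) p 2).symm
  set w := (2 * z.re) • a - a * a
  have hw : ‖w‖ ≤ 2 ^ p * R * N + N ^ 2 := by
    have h2re : |2 * z.re| ^ p ≤ 2 ^ p * R := by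
      rw [abs_mul, abs_two, Real.mul_rpow zero_le_two (abs_nonneg _)]
      exact mul_le_mul_of_nonneg_left
        (Real.rpow_le_rpow (abs_nonneg _) (Complex.abs_re_le_norm z) hp.le) (by positivity)
    calc ‖w‖ ≤ ‖(2 * z.re) • a‖ + ‖a * a‖ := norm_sub_le _ _
      _ ≤ 2 ^ p * R * N + N ^ 2 := by
        rw [h_smul, sq]
        gcongr
        exact norm_mul_le a a
  -- `(a - Re z)² + (Im z)² = ‖z‖² (1 - ‖z‖⁻² • w)` is not invertible.
  have hv : 1 ≤ ‖(‖z‖ ^ 2)⁻¹ • w‖ := by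
    by_contra! hv
    apply hz
    rw [sq_sub_algebraMap_add_algebraMap, hr]
    exact isUnit_algebraMap_sub (by positivity) hv
  rw [h_smul, abs_of_pos (by positivity), Real.inv_rpow (by positivity), hrp,
    inv_mul_eq_div, one_le_div (by positivity)] at hv
  nlinarith [Real.rpow_pos_of_pos two_pos p]

lemma norm_le_rpow_of_mem_realSpectrum {a : A} {z : ℂ} (hz : z ∈ realSpectrum a) :
    ‖z‖ ≤ ‖a‖ ^ (1 / p) := by
  have hpow : ‖z‖ ^ p ≤ ‖a‖ := by
    refine le_of_forall_pow_le_mul_pow_s10 (C := 2 ^ p + 1) (by positivity) (norm_nonneg a)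
      fun n hn => ?_
    calc (‖z‖ ^ p) ^ n = ‖z ^ n‖ ^ p := by rw [norm_pow, Real.rpow_pow_comm (norm_nonneg z)]
      _ ≤ (2 ^ p + 1) * ‖a ^ n‖ :=
        norm_rpow_le_of_mem_realSpectrum hp h_smul (pow_mem_realSpectrum hz n)
      _ ≤ (2 ^ p + 1) * ‖a‖ ^ n := by gcongr; exact norm_pow_le' a hn
  calc ‖z‖ = (‖z‖ ^ p) ^ p⁻¹ := (Real.rpow_rpow_inv (norm_nonneg z) hp.ne').symm
    _ ≤ ‖a‖ ^ (1 / p) := by rw [one_div]; gcongr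

lemma realSpectralRadius_le_rpow_norm (a : A) : realSpectralRadius a ≤ ‖a‖ ^ (1 / p) :=
  Real.sSup_le (by rintro _ ⟨z, hz, rfl⟩; exact norm_le_rpow_of_mem_realSpectrum hp h_smul hz)
    (by positivity)

end PNormed

end RealSpectrum

-- No homogeneity is required, so a `p`-norm qualifies.
abbrev NormedRing.ofSubmultiplicative {A : Type*} [Ring A] [MetricSpace A] (nrm : A → ℝ)
    (h_mul : ∀ a b : A, nrm (a * b) ≤ nrm a * nrm b) (h_dist : ∀ a b : A, dist a b = nrm (a - b)) :
    NormedRing A where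
  __ := ‹Ring A›
  __ := ‹MetricSpace A›
  norm := nrm
  dist_eq x y := by rw [dist_comm, h_dist, neg_add_eq_sub]
  norm_mul_le := h_mul

theorem stmt10_general {A : Type*} [Ring A] [Algebra ℝ A] [MetricSpace A] [CompleteSpace A]
    {p : ℝ} (hp0 : 0 < p)
    (nrm : A → ℝ)
    (h_smul : ∀ (α : ℝ) (a : A), nrm (α • a) = |α| ^ p * nrm a)
    (h_mul : ∀ a b : A, nrm (a * b) ≤ nrm a * nrm b)
    (h_dist : ∀ a b : A, dist a b = nrm (a - b))
    {m : ℝ}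
    (h_spec : ∀ a : A, nrm a ^ (1 / p) ≤ m * realSpectralRadius a) :
    ∀ a b : A, realSpectralRadius (a * b) ≤ m ^ 2 * realSpectralRadius a * realSpectralRadius b := by
  intro a b
  let _ : NormedRing A := .ofSubmultiplicative nrm h_mul h_dist
  have hr (x : A) : realSpectralRadius x ≤ nrm x ^ (1 / p) :=
    RealSpectrum.realSpectralRadius_le_rpow_norm hp0 h_smul x
  have hnn (x : A) : 0 ≤ nrm x ^ (1 / p) := Real.rpow_nonneg (norm_nonneg x) _
  calc realSpectralRadius (a * b) ≤ nrm (a * b) ^ (1 / p) := hr _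
    _ ≤ (nrm a * nrm b) ^ (1 / p) :=
      Real.rpow_le_rpow (norm_nonneg (a * b)) (h_mul a b) (by positivity)
    _ = nrm a ^ (1 / p) * nrm b ^ (1 / p) := Real.mul_rpow (norm_nonneg a) (norm_nonneg b)
    _ ≤ (m * realSpectralRadius a) * (m * realSpectralRadius b) :=
      mul_le_mul (h_spec a) (h_spec b) (hnn b) ((hnn a).trans (h_spec a))
    _ = m ^ 2 * realSpectralRadius a * realSpectralRadius b := by ring

/-- The spectral radius satisfies r(ab) ≤ m²·r(a)·r(b). -/
theorem stmt10 {A : Type*} [Ring A] [Algebra ℝ A] [MetricSpace A] [CompleteSpace A]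
    {p : ℝ} (hp0 : 0 < p) (hp1 : p ≤ 1)
    (nrm : A → ℝ)
    (h_add : ∀ a b : A, nrm (a + b) ≤ nrm a + nrm b)
    (h_smul : ∀ (α : ℝ) (a : A), nrm (α • a) = |α| ^ p * nrm a)
    (h_mul : ∀ a b : A, nrm (a * b) ≤ nrm a * nrm b)
    (h_zero : ∀ a : A, nrm a = 0 → a = 0)
    (h_dist : ∀ a b : A, dist a b = nrm (a - b))
    {m : ℝ} (hm : 0 < m)
    (h_spec : ∀ a : A, nrm a ^ (1 / p) ≤ m * realSpectralRadius a) :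
    ∀ a b : A, realSpectralRadius (a * b) ≤ m ^ 2 * realSpectralRadius a * realSpectralRadius b :=
  stmt10_general hp0 nrm h_smul h_mul h_dist h_spec
end

section
/- Let (A, ‖·‖) be a complex p-normed algebra such that ‖a‖² ≤ m·‖a²‖ for some constant m > 0 and all a ∈ A, and let |·| be the support seminorm of ‖·‖. Then |a|² ≤ m^(2/p)·|a²| for all a ∈ A. -/
/-- The support seminorm of a p-homogeneous norm ‖·‖:
|a| = inf { ∑ᵢ ‖aᵢ‖^(1/p) : a = a₁ + ⋯ + aₙ, n ≥ 1 }. -/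
noncomputable def suppSeminorm {A : Type*} [AddCommGroup A] (p : ℝ) (nrm : A → ℝ)
    (a : A) : ℝ :=
  sInf {s : ℝ | ∃ l : List A, l ≠ [] ∧ l.sum = a ∧
    s = (l.map fun x => nrm x ^ (1 / p)).sum}

/-!
Iterating `‖a‖² ≤ m‖a²‖` gives `(‖a‖/m)^(2^k) ≤ ‖a^(2^k)‖/m`, so `‖a‖ ≤ m B` as soon as
`‖a^(2^k)‖` grows at most like `poly(2^k) · B^(2^k)`. Applied to `(xy)^(2^k) = x (yx)^(2^k-1) y`
this gives `‖xy‖ ≤ m ‖yx‖`.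

The algebra is commutative. With `U, V = (1 ± z x / T)^T` (truncated exponentials), the polynomial
`g(z) = U y V - y` has `g(0) = 0` and `g'(0) = xy - yx`, and on the unit circle
`‖g(z)‖ ≤ m ‖y V U‖ + ‖y‖ ≤ (2m+1) ‖y‖`, because `VU = (1 - z²x²/T²)^T` is close to `1` for
large `T`.
Averaging `g^N` over roots of unity extracts its `N`-th coefficient `(xy - yx)^N`, so
`‖xy - yx‖ ≤ m (2m+1) ‖y‖` for every `x`; replacing `x` by `t x` forces `xy = yx`.

In the commutative algebra the binomial theorem gives `‖∑ bᵢ‖ ≤ m (∑ ‖bᵢ‖^(1/p))^p`, hence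
`|a|² ≤ ‖a‖^(2/p) ≤ (m ‖a²‖)^(1/p) ≤ m^(2/p) ∑ ‖bᵢ‖^(1/p)` for every decomposition `a² = ∑ bᵢ`.
-/

open Filter Finset Polynomial Topology

theorem le_one_of_pow_two_pow_le {t C : ℝ} (n : ℕ)
    (h : ∀ᶠ k in atTop, t ^ 2 ^ k ≤ C * ((2 : ℝ) ^ k + 1) ^ n) : t ≤ 1 := by
  by_contra! ht1
  have hlim : Tendsto (fun k : ℕ => t * C * (((2 ^ k + 1 : ℕ) : ℝ) ^ n / t ^ (2 ^ k + 1)))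
      atTop (𝓝 (t * C * 0)) :=
    ((tendsto_pow_const_div_const_pow_of_one_lt n ht1).comp ((tendsto_add_atTop_nat 1).comp
      (tendsto_pow_atTop_atTop_of_one_lt (α := ℕ) one_lt_two))).const_mul _
  rw [mul_zero] at hlim
  obtain ⟨k, hk, hsmall⟩ := (h.and (hlim.eventually (eventually_lt_nhds one_pos))).exists
  have htk : 0 < t ^ 2 ^ k := by positivity
  have : t * C * (((2 ^ k + 1 : ℕ) : ℝ) ^ n / t ^ (2 ^ k + 1))
      = C * ((2 : ℝ) ^ k + 1) ^ n / t ^ 2 ^ k := by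
    push_cast
    field_simp
    ring
  rw [this, div_lt_one htk] at hsmall
  linarith

theorem sum_choose_mul_rpow_le {u v p : ℝ} (hu : 0 ≤ u) (hv : 0 ≤ v) (hp : 0 ≤ p) (N : ℕ) :
    ∑ j ∈ range (N + 1), (N.choose j * u ^ j * v ^ (N - j)) ^ p ≤ (N + 1) * ((u + v) ^ N) ^ p := by
  have hterm : ∀ j ∈ range (N + 1), N.choose j * u ^ j * v ^ (N - j) ≤ (u + v) ^ N := by
    intro j hj
    rw [add_pow]
    refine (le_of_eq (by ring)).trans
      (single_le_sum (f := fun i => u ^ i * v ^ (N - i) * N.choose i) (fun i _ => by positivity) hj)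
  calc ∑ j ∈ range (N + 1), (N.choose j * u ^ j * v ^ (N - j)) ^ p
      ≤ ∑ _j ∈ range (N + 1), ((u + v) ^ N) ^ p :=
        sum_le_sum fun j hj => Real.rpow_le_rpow (by positivity) (hterm j hj) hp
    _ = (N + 1) * ((u + v) ^ N) ^ p := by simp

theorem IsPrimitiveRoot.sum_pow_pow {R : Type*} [CommRing R] [IsDomain R] {ζ : R} {M : ℕ}
    (hζ : IsPrimitiveRoot ζ M) (e : ℕ) :
    ∑ l ∈ range M, (ζ ^ e) ^ l = if M ∣ e then (M : R) else 0 := by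
  split_ifs with he
  · simp [(hζ.pow_eq_one_iff_dvd e).mpr he]
  · have hne : ζ ^ e - 1 ≠ 0 := sub_ne_zero.mpr fun h => he ((hζ.pow_eq_one_iff_dvd e).mp h)
    refine (mul_eq_zero.mp ?_).resolve_right hne
    rw [geom_sum_mul, ← pow_mul, mul_comm, pow_mul, hζ.pow_eq_one, one_pow, sub_self]

namespace Polynomial

variable {R : Type*} [Semiring R]

theorem coeff_one_mul (P Q : R[X]) :
    (P * Q).coeff 1 = P.coeff 0 * Q.coeff 1 + P.coeff 1 * Q.coeff 0 := by
  rw [coeff_mul, Finset.Nat.antidiagonal_succ]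
  simp [add_comm]

theorem coeff_zero_pow (P : R[X]) (n : ℕ) : (P ^ n).coeff 0 = P.coeff 0 ^ n :=
  map_pow constantCoeff P n

theorem coeff_one_pow_of_coeff_zero_eq_one {P : R[X]} (hP : P.coeff 0 = 1) (n : ℕ) :
    (P ^ n).coeff 1 = n * P.coeff 1 := by
  induction n with
  | zero => simp [coeff_one]
  | succ n ih =>
    rw [pow_succ, coeff_one_mul, ih, coeff_zero_pow, hP]
    simp [add_mul, add_comm]

theorem coeff_pow_self_of_coeff_zero_eq_zero {P : R[X]} (hP : P.coeff 0 = 0) (n : ℕ) :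
    (P ^ n).coeff n = P.coeff 1 ^ n := by
  have hX : P = X * P.divX := by simpa [hP] using (X_mul_divX_add P).symm
  conv_lhs => rw [hX, (commute_X _).mul_pow, coeff_X_pow_mul', if_pos le_rfl, Nat.sub_self]
  rw [coeff_zero_pow, coeff_divX, zero_add]

end Polynomial

section Submultiplicative

variable {A : Type*} [Ring A] {nrm : A → ℝ}

theorem nrm_mul_pow_le (hnn : ∀ a, 0 ≤ nrm a) (h_mul : ∀ a b : A, nrm (a * b) ≤ nrm a * nrm b)
    (a b : A) (j : ℕ) : nrm (a * b ^ j) ≤ nrm a * nrm b ^ j := by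
  induction j with
  | zero => simp
  | succ j ih =>
    calc nrm (a * b ^ (j + 1)) ≤ nrm (a * b ^ j) * nrm b := by
          rw [pow_succ, ← mul_assoc]; exact h_mul _ _
      _ ≤ nrm a * nrm b ^ j * nrm b := by gcongr; exact hnn b
      _ = nrm a * nrm b ^ (j + 1) := by ring

theorem nrm_pow_le (hnn : ∀ a, 0 ≤ nrm a) (h_mul : ∀ a b : A, nrm (a * b) ≤ nrm a * nrm b)
    (a : A) {j : ℕ} (hj : j ≠ 0) : nrm (a ^ j) ≤ nrm a ^ j := by
  obtain ⟨i, rfl⟩ := Nat.exists_eq_succ_of_ne_zero hj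
  rw [pow_succ', pow_succ']
  exact nrm_mul_pow_le hnn h_mul a a i

end Submultiplicative

section PHomogeneous

variable {A : Type*} [Ring A] [Algebra ℂ A] {p : ℝ} {nrm : A → ℝ}

theorem nrm_zero_of_smul (hp : 0 < p) (h_smul : ∀ (z : ℂ) (a : A), nrm (z • a) = ‖z‖ ^ p * nrm a) :
    nrm 0 = 0 := by
  simpa [Real.zero_rpow hp.ne'] using h_smul 0 0

theorem nrm_neg_of_smul (h_smul : ∀ (z : ℂ) (a : A), nrm (z • a) = ‖z‖ ^ p * nrm a) (a : A) :
    nrm (-a) = nrm a := by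
  simpa using h_smul (-1) a

theorem nrm_nonneg_of_add_le (hp : 0 < p) (h_add : ∀ a b : A, nrm (a + b) ≤ nrm a + nrm b)
    (h_smul : ∀ (z : ℂ) (a : A), nrm (z • a) = ‖z‖ ^ p * nrm a) (a : A) : 0 ≤ nrm a := by
  have h := h_add a (-a)
  rw [add_neg_cancel, nrm_zero_of_smul hp h_smul, nrm_neg_of_smul h_smul] at h
  linarith

theorem nrm_mul_natCast (h_smul : ∀ (z : ℂ) (a : A), nrm (z • a) = ‖z‖ ^ p * nrm a)
    (a : A) (n : ℕ) : nrm (a * n) = (n : ℝ) ^ p * nrm a := by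
  rw [← map_natCast (algebraMap ℂ A), ← Algebra.commutes, ← Algebra.smul_def, h_smul,
    Complex.norm_natCast]

end PHomogeneous

section SquareBound

variable {A : Type*} [Ring A] {m : ℝ} {nrm : A → ℝ}

theorem div_pow_two_pow_le (hm : 0 < m) (hnn : ∀ a, 0 ≤ nrm a)
    (h_sq : ∀ a : A, nrm a ^ 2 ≤ m * nrm (a ^ 2)) (a : A) (k : ℕ) :
    (nrm a / m) ^ 2 ^ k ≤ nrm (a ^ 2 ^ k) / m := by
  induction k with
  | zero => simp
  | succ k ih =>
    calc (nrm a / m) ^ 2 ^ (k + 1) = ((nrm a / m) ^ 2 ^ k) ^ 2 := by rw [pow_succ, pow_mul]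
      _ ≤ (nrm (a ^ 2 ^ k) / m) ^ 2 := by gcongr; have := hnn a; positivity
      _ = nrm (a ^ 2 ^ k) ^ 2 / m / m := by ring
      _ ≤ m * nrm ((a ^ 2 ^ k) ^ 2) / m / m := by gcongr; exact h_sq _
      _ = nrm (a ^ 2 ^ (k + 1)) / m := by rw [← pow_mul, ← pow_succ]; field_simp

theorem nrm_le_of_pow_two_pow_le (hm : 0 < m) (hnn : ∀ a, 0 ≤ nrm a)
    (h_sq : ∀ a : A, nrm a ^ 2 ≤ m * nrm (a ^ 2)) {a : A} {B C : ℝ} (n : ℕ) (hB : 0 ≤ B)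
    (h : ∀ᶠ k in atTop, nrm (a ^ 2 ^ k) ≤ C * ((2 : ℝ) ^ k + 1) ^ n * B ^ 2 ^ k) :
    nrm a ≤ m * B := by
  rcases hB.eq_or_lt with rfl | hB
  · obtain ⟨k, hk⟩ := h.exists
    have h0 : (nrm a / m) ^ 2 ^ k ≤ 0 ^ 2 ^ k := by
      rw [zero_pow (by positivity)]
      simpa using (div_pow_two_pow_le hm hnn h_sq a k).trans (div_le_div_of_nonneg_right hk hm.le)
    have := le_of_pow_le_pow_left₀ (by positivity) le_rfl h0
    rwa [div_le_iff₀ hm, zero_mul, ← mul_zero m] at this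
  suffices nrm a / (m * B) ≤ 1 by rwa [div_le_one (by positivity)] at this
  refine le_one_of_pow_two_pow_le (C := C / m) n (h.mono fun k hk => ?_)
  calc (nrm a / (m * B)) ^ 2 ^ k = (nrm a / m) ^ 2 ^ k / B ^ 2 ^ k := by
        rw [← div_div, div_pow]
    _ ≤ nrm (a ^ 2 ^ k) / m / B ^ 2 ^ k := by gcongr; exact div_pow_two_pow_le hm hnn h_sq a k
    _ ≤ C * ((2 : ℝ) ^ k + 1) ^ n * B ^ 2 ^ k / m / B ^ 2 ^ k := by gcongr
    _ = C / m * ((2 : ℝ) ^ k + 1) ^ n := by field_simp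

theorem nrm_mul_le_mul_nrm_mul_comm (hm : 0 < m) (hnn : ∀ a, 0 ≤ nrm a)
    (h_mul : ∀ a b : A, nrm (a * b) ≤ nrm a * nrm b)
    (h_sq : ∀ a : A, nrm a ^ 2 ≤ m * nrm (a ^ 2)) (x y : A) :
    nrm (x * y) ≤ m * nrm (y * x) := by
  refine nrm_le_of_pow_two_pow_le hm hnn h_sq (C := nrm x * nrm y / nrm (y * x)) 0 (hnn _)
    ((eventually_ge_atTop 1).mono fun k hk => ?_)
  obtain ⟨i, hi⟩ := Nat.exists_eq_add_one_of_ne_zero (pow_ne_zero k two_ne_zero)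
  have hword : (x * y) ^ (i + 1) = x * (y * x) ^ i * y := by
    rw [pow_succ, ← mul_assoc, mul_pow_mul]
  have hi0 : i ≠ 0 := by
    have := Nat.one_lt_two_pow (n := k) (by omega)
    omega
  rw [hi, hword, pow_zero, mul_one]
  calc nrm (x * (y * x) ^ i * y) ≤ nrm x * nrm (y * x) ^ i * nrm y :=
        (h_mul _ _).trans (by gcongr; exacts [hnn y, nrm_mul_pow_le hnn h_mul _ _ _])
    _ = nrm x * nrm y / nrm (y * x) * nrm (y * x) ^ (i + 1) := by
        rcases (hnn (y * x)).eq_or_lt with h0 | h0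
        · rw [← h0, zero_pow hi0]; simp
        · field_simp; ring

end SquareBound

section CentralEval

variable {A : Type*} [Ring A] [Algebra ℂ A]

noncomputable def evalScalar (z : ℂ) : A[X] →+* A :=
  eval₂RingHom' (RingHom.id A) (algebraMap ℂ A z) fun a => (Algebra.commutes z a).symm

theorem evalScalar_apply (z : ℂ) (P : A[X]) :
    evalScalar z P = P.eval₂ (RingHom.id A) (algebraMap ℂ A z) := rfl

theorem evalScalar_C (z : ℂ) (a : A) : evalScalar z (C a) = a := eval₂_C _ _

theorem evalScalar_C_mul_X (z : ℂ) (a : A) : evalScalar z (C a * X) = z • a := by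
  rw [map_mul, evalScalar_apply, evalScalar_apply, eval₂_X, eval₂_C, RingHom.id_apply,
    Algebra.smul_def, Algebra.commutes]

theorem evalScalar_eq_sum (z : ℂ) {P : A[X]} {M : ℕ} (hP : P.natDegree < M) :
    evalScalar z P = ∑ i ∈ range M, z ^ i • P.coeff i := by
  rw [evalScalar_apply, eval₂_eq_sum_range' _ hP]
  refine sum_congr rfl fun i _ => ?_
  rw [RingHom.id_apply, ← map_pow, ← Algebra.commutes, Algebra.smul_def]

theorem sum_root_smul_evalScalar {ζ : ℂ} {M n : ℕ} (hζ : IsPrimitiveRoot ζ M) {P : A[X]}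
    (hP : P.natDegree < M) (hn : n < M) :
    ∑ l ∈ range M, ζ ^ ((M - n) * l) • evalScalar (ζ ^ l) P = (M : ℂ) • P.coeff n := by
  have hterm : ∀ j ∈ range M,
      ∑ l ∈ range M, ζ ^ ((M - n) * l) • (ζ ^ l) ^ j • P.coeff j
        = if j = n then (M : ℂ) • P.coeff j else 0 := by
    intro j hj
    have hdvd : M ∣ M - n + j ↔ j = n := by
      rw [mem_range] at hj
      refine ⟨fun h => ?_, fun h => ⟨1, by omega⟩⟩
      have := Nat.eq_of_dvd_of_lt_two_mul (by omega) h (by omega)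
      omega
    have hζl : ∀ l, ζ ^ ((M - n) * l) * (ζ ^ l) ^ j = (ζ ^ (M - n + j)) ^ l := fun l => by ring
    simp_rw [smul_smul, ← Finset.sum_smul, hζl, hζ.sum_pow_pow, hdvd]
    split_ifs <;> simp
  simp_rw [evalScalar_eq_sum _ hP, Finset.smul_sum]
  rw [sum_comm, sum_congr rfl hterm, sum_ite_eq' _ n, if_pos (mem_range.mpr hn)]

end CentralEval

section CauchyEstimate

variable {A : Type*} [Ring A] [Algebra ℂ A] {p : ℝ} {nrm : A → ℝ}

/-- Discrete Cauchy estimate: average `P` over the `M`-th roots of unity. -/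
theorem nrm_coeff_le_of_nrm_evalScalar_le (hp : 0 < p)
    (h_add : ∀ a b : A, nrm (a + b) ≤ nrm a + nrm b)
    (h_smul : ∀ (z : ℂ) (a : A), nrm (z • a) = ‖z‖ ^ p * nrm a) {P : A[X]} {M n : ℕ}
    (hP : P.natDegree < M) (hn : n < M) {K : ℝ}
    (hK : ∀ z : ℂ, ‖z‖ = 1 → nrm (evalScalar z P) ≤ K) :
    nrm (P.coeff n) ≤ M * K := by
  have hM : M ≠ 0 := by omega
  have hζ := Complex.isPrimitiveRoot_exp M hM
  set ζ := Complex.exp (2 * Real.pi * Complex.I / M)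
  have hζl : ∀ l : ℕ, ‖ζ ^ l‖ = 1 := fun l => by rw [norm_pow, hζ.norm'_eq_one hM, one_pow]
  have hM1 : (1 : ℝ) ≤ M := by exact_mod_cast Nat.one_le_iff_ne_zero.mpr hM
  calc nrm (P.coeff n) ≤ (M : ℝ) ^ p * nrm (P.coeff n) :=
        le_mul_of_one_le_left (nrm_nonneg_of_add_le hp h_add h_smul _) (Real.one_le_rpow hM1 hp.le)
    _ = nrm (∑ l ∈ range M, ζ ^ ((M - n) * l) • evalScalar (ζ ^ l) P) := by
        rw [sum_root_smul_evalScalar hζ hP hn, h_smul, Complex.norm_natCast]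
    _ ≤ ∑ l ∈ range M, nrm (ζ ^ ((M - n) * l) • evalScalar (ζ ^ l) P) :=
        le_sum_of_subadditive nrm (nrm_zero_of_smul hp h_smul).le h_add _ _
    _ ≤ ∑ _l ∈ range M, K := sum_le_sum fun l _ => by
        rw [h_smul, hζl, Real.one_rpow, one_mul]
        exact hK _ (hζl l)
    _ = M * K := by rw [sum_const, card_range, nsmul_eq_mul]

theorem nrm_coeff_one_pow_le (hp : 0 < p)
    (h_add : ∀ a b : A, nrm (a + b) ≤ nrm a + nrm b)
    (h_smul : ∀ (z : ℂ) (a : A), nrm (z • a) = ‖z‖ ^ p * nrm a)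
    (h_mul : ∀ a b : A, nrm (a * b) ≤ nrm a * nrm b) {g : A[X]} (hg0 : g.coeff 0 = 0)
    {D : ℕ} (hD : g.natDegree ≤ D) {B : ℝ} (hB : ∀ z : ℂ, ‖z‖ = 1 → nrm (evalScalar z g) ≤ B)
    {N : ℕ} (hN : N ≠ 0) :
    nrm (g.coeff 1 ^ N) ≤ ((D + 1) * N + 1 : ℕ) * B ^ N := by
  have hnn := nrm_nonneg_of_add_le hp h_add h_smul
  have hdeg : (g ^ N).natDegree < (D + 1) * N + 1 :=
    natDegree_pow_le.trans_lt (by have := Nat.mul_le_mul_left N hD; nlinarith)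
  rw [← coeff_pow_self_of_coeff_zero_eq_zero hg0]
  refine nrm_coeff_le_of_nrm_evalScalar_le hp h_add h_smul hdeg (by nlinarith) fun z hz => ?_
  rw [map_pow]
  exact (nrm_pow_le hnn h_mul _ hN).trans (pow_le_pow_left₀ (hnn _) (hB z hz) N)

end CauchyEstimate

section ConjugationPoly

variable {A : Type*} [Ring A]

/-- A truncation of `z ↦ exp (T z a) y exp (-T z a) - y`. -/
noncomputable def conjugationPoly (a y : A) (T : ℕ) : A[X] :=
  (1 + C a * X) ^ T * C y * (1 - C a * X) ^ T - C y

theorem coeff_zero_conjugationPoly (a y : A) (T : ℕ) : (conjugationPoly a y T).coeff 0 = 0 := by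
  simp [conjugationPoly, mul_coeff_zero, coeff_zero_pow]

theorem coeff_one_conjugationPoly (a y : A) (T : ℕ) :
    (conjugationPoly a y T).coeff 1 = T * a * y - y * (T * a) := by
  have h1 : (1 + C a * X).coeff 0 = 1 := by simp
  have h2 : (1 - C a * X).coeff 0 = 1 := by simp
  simp only [conjugationPoly, coeff_sub, coeff_one_mul, coeff_mul_C, coeff_zero_pow,
    coeff_one_pow_of_coeff_zero_eq_one h1, coeff_one_pow_of_coeff_zero_eq_one h2, h1, h2]
  simp [coeff_one, mul_assoc]
  abel

theorem natDegree_conjugationPoly_le (a y : A) (T : ℕ) :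
    (conjugationPoly a y T).natDegree ≤ 2 * T := by
  unfold conjugationPoly
  compute_degree
  omega

end ConjugationPoly

section Commutativity

variable {A : Type*} [Ring A] [Algebra ℂ A] {p m : ℝ} {nrm : A → ℝ}

theorem evalScalar_conjugationPoly (z : ℂ) (a y : A) (T : ℕ) :
    evalScalar z (conjugationPoly a y T) = (1 + z • a) ^ T * y * (1 - z • a) ^ T - y := by
  simp [conjugationPoly, evalScalar_C_mul_X, evalScalar_C]

theorem nrm_one_add_pow_sub_one_le (hp : 0 < p)
    (h_add : ∀ a b : A, nrm (a + b) ≤ nrm a + nrm b)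
    (h_smul : ∀ (z : ℂ) (a : A), nrm (z • a) = ‖z‖ ^ p * nrm a)
    (h_mul : ∀ a b : A, nrm (a * b) ≤ nrm a * nrm b) {v : A} {T : ℕ}
    (hv : (T : ℝ) ^ p * nrm v ≤ 1 / 2) :
    nrm ((1 + v) ^ T - 1) ≤ 1 := by
  have hnn := nrm_nonneg_of_add_le hp h_add h_smul
  have hexp : (1 + v) ^ T - 1 = ∑ i ∈ range T, v ^ (i + 1) * ((T.choose (i + 1) : ℕ) : A) := by
    rw [add_comm, (Commute.one_right v).add_pow, sum_range_succ']
    simp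
  rw [hexp]
  calc nrm (∑ i ∈ range T, v ^ (i + 1) * ((T.choose (i + 1) : ℕ) : A))
      ≤ ∑ i ∈ range T, nrm (v ^ (i + 1) * ((T.choose (i + 1) : ℕ) : A)) :=
        le_sum_of_subadditive nrm (nrm_zero_of_smul hp h_smul).le h_add _ _
    _ ≤ ∑ i ∈ range T, ((T : ℝ) ^ p * nrm v) ^ (i + 1) := sum_le_sum fun i _ => by
        rw [nrm_mul_natCast h_smul, mul_pow, Real.rpow_pow_comm (Nat.cast_nonneg _)]
        gcongr
        · exact hnn _
        · exact_mod_cast Nat.choose_le_pow T (i + 1)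
        · exact nrm_pow_le hnn h_mul v (Nat.succ_ne_zero i)
    _ ≤ ∑ i ∈ range T, (1 / 2 : ℝ) ^ (i + 1) := by
        gcongr
        exact mul_nonneg (by positivity) (hnn v)
    _ ≤ 1 := by
        simp_rw [pow_succ, ← sum_mul]
        linarith [sum_geometric_two_le T]

theorem nrm_conj_sub_le (hp : 0 < p) (hm : 0 < m)
    (h_add : ∀ a b : A, nrm (a + b) ≤ nrm a + nrm b)
    (h_smul : ∀ (z : ℂ) (a : A), nrm (z • a) = ‖z‖ ^ p * nrm a)
    (h_mul : ∀ a b : A, nrm (a * b) ≤ nrm a * nrm b)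
    (h_sq : ∀ a : A, nrm a ^ 2 ≤ m * nrm (a ^ 2)) {w : A} {T : ℕ}
    (hw : (T : ℝ) ^ p * nrm (w ^ 2) ≤ 1 / 2) (y : A) :
    nrm ((1 + w) ^ T * y * (1 - w) ^ T - y) ≤ (2 * m + 1) * nrm y := by
  have hnn := nrm_nonneg_of_add_le hp h_add h_smul
  set d := (1 + -w ^ 2) ^ T - 1
  have hd : nrm d ≤ 1 :=
    nrm_one_add_pow_sub_one_le hp h_add h_smul h_mul (by rwa [nrm_neg_of_smul h_smul])
  have hswap : y * (1 - w) ^ T * (1 + w) ^ T = y + y * d := by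
    have hc : Commute (1 - w) (1 + w) := by rw [Commute, SemiconjBy]; noncomm_ring
    rw [mul_assoc, ← hc.mul_pow]
    simp only [d]
    noncomm_ring
  calc nrm ((1 + w) ^ T * y * (1 - w) ^ T - y)
      ≤ nrm ((1 + w) ^ T * (y * (1 - w) ^ T)) + nrm y := by
        rw [sub_eq_add_neg, mul_assoc, ← nrm_neg_of_smul h_smul y]
        exact h_add _ _
    _ ≤ m * nrm (y + y * d) + nrm y := by
        rw [← hswap]
        gcongr
        exact nrm_mul_le_mul_nrm_mul_comm hm hnn h_mul h_sq _ _
    _ ≤ m * (nrm y + nrm y * 1) + nrm y := by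
        gcongr
        exact (h_add _ _).trans (by gcongr; exact (h_mul _ _).trans (by gcongr; exact hnn y))
    _ = (2 * m + 1) * nrm y := by ring

theorem nrm_commutator_le (hp : 0 < p) (hm : 0 < m)
    (h_add : ∀ a b : A, nrm (a + b) ≤ nrm a + nrm b)
    (h_smul : ∀ (z : ℂ) (a : A), nrm (z • a) = ‖z‖ ^ p * nrm a)
    (h_mul : ∀ a b : A, nrm (a * b) ≤ nrm a * nrm b)
    (h_sq : ∀ a : A, nrm a ^ 2 ≤ m * nrm (a ^ 2)) (x y : A) :
    nrm (x * y - y * x) ≤ m * ((2 * m + 1) * nrm y) := by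
  have hnn := nrm_nonneg_of_add_le hp h_add h_smul
  obtain ⟨T, hT1, hT⟩ : ∃ T : ℕ, 1 ≤ T ∧ 2 * nrm x ^ 2 ≤ (T : ℝ) ^ p :=
    ((eventually_ge_atTop 1).and (((tendsto_rpow_atTop hp).comp
      tendsto_natCast_atTop_atTop).eventually_ge_atTop _)).exists
  have hTp : 0 < (T : ℝ) ^ p := Real.rpow_pos_of_pos (by exact_mod_cast hT1) p
  set a := ((T : ℂ)⁻¹) • x
  have hTa : (T : A) * a = x := by
    rw [← map_natCast (algebraMap ℂ A), ← Algebra.smul_def, smul_smul,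
      mul_inv_cancel₀ (by exact_mod_cast (by omega : T ≠ 0)), one_smul]
  have hsmall (z : ℂ) (hz : ‖z‖ = 1) : (T : ℝ) ^ p * nrm ((z • a) ^ 2) ≤ 1 / 2 := by
    have hza : nrm (z • a) = nrm x / (T : ℝ) ^ p := by
      rw [h_smul, h_smul, hz, Real.one_rpow, one_mul, norm_inv, Complex.norm_natCast,
        Real.inv_rpow (Nat.cast_nonneg _), inv_mul_eq_div]
    calc (T : ℝ) ^ p * nrm ((z • a) ^ 2) ≤ (T : ℝ) ^ p * nrm (z • a) ^ 2 := by
          gcongr; exact nrm_pow_le hnn h_mul _ two_ne_zero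
      _ = nrm x ^ 2 / (T : ℝ) ^ p := by rw [hza]; field_simp
      _ ≤ 1 / 2 := by rw [div_le_iff₀ hTp]; linarith
  refine nrm_le_of_pow_two_pow_le hm hnn h_sq (C := 2 * T + 2) 1
    (mul_nonneg (by linarith) (hnn y)) (Eventually.of_forall fun k => ?_)
  rw [← hTa, ← coeff_one_conjugationPoly]
  calc _ ≤ (((2 * T + 1) * 2 ^ k + 1 : ℕ) : ℝ) * ((2 * m + 1) * nrm y) ^ 2 ^ k :=
        nrm_coeff_one_pow_le hp h_add h_smul h_mul (coeff_zero_conjugationPoly a y T)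
          (natDegree_conjugationPoly_le a y T) (fun z hz => by
            rw [evalScalar_conjugationPoly]
            exact nrm_conj_sub_le hp hm h_add h_smul h_mul h_sq (hsmall z hz) y)
          (pow_ne_zero k two_ne_zero)
    _ ≤ (2 * T + 2) * ((2 : ℝ) ^ k + 1) ^ 1 * ((2 * m + 1) * nrm y) ^ 2 ^ k := by
        refine mul_le_mul_of_nonneg_right ?_ (pow_nonneg (mul_nonneg (by linarith) (hnn y)) _)
        push_cast
        nlinarith [(T.cast_nonneg : (0 : ℝ) ≤ T), pow_pos (two_pos : (0 : ℝ) < 2) k]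

theorem mul_comm_of_nrm_sq_le (hp : 0 < p) (hm : 0 < m)
    (h_add : ∀ a b : A, nrm (a + b) ≤ nrm a + nrm b)
    (h_smul : ∀ (z : ℂ) (a : A), nrm (z • a) = ‖z‖ ^ p * nrm a)
    (h_mul : ∀ a b : A, nrm (a * b) ≤ nrm a * nrm b)
    (h_zero : ∀ a : A, nrm a = 0 → a = 0)
    (h_sq : ∀ a : A, nrm a ^ 2 ≤ m * nrm (a ^ 2)) (x y : A) :
    x * y = y * x := by
  refine sub_eq_zero.mp (h_zero _ (le_antisymm ?_ (nrm_nonneg_of_add_le hp h_add h_smul _)))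
  by_contra! hc
  have hgrow : Tendsto (fun t : ℕ => (t : ℝ) ^ p * nrm (x * y - y * x)) atTop atTop :=
    ((tendsto_rpow_atTop hp).comp tendsto_natCast_atTop_atTop).atTop_mul_const hc
  obtain ⟨t, ht⟩ := (hgrow.eventually_gt_atTop (m * ((2 * m + 1) * nrm y))).exists
  have := nrm_commutator_le hp hm h_add h_smul h_mul h_sq ((t : ℂ) • x) y
  rw [smul_mul_assoc, mul_smul_comm, ← smul_sub, h_smul, Complex.norm_natCast] at this
  linarith

end Commutativity

section DecompositionCost

variable {A : Type*} {p : ℝ} {nrm : A → ℝ}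

noncomputable def rpowNormSum (p : ℝ) (nrm : A → ℝ) (l : List A) : ℝ :=
  (l.map fun x => nrm x ^ (1 / p)).sum

theorem rpowNormSum_nonneg (hnn : ∀ a, 0 ≤ nrm a) (l : List A) : 0 ≤ rpowNormSum p nrm l :=
  List.sum_nonneg fun _ hx => by
    obtain ⟨c, _, rfl⟩ := List.mem_map.mp hx
    exact Real.rpow_nonneg (hnn c) _

theorem rpowNormSum_cons (b : A) (l : List A) :
    rpowNormSum p nrm (b :: l) = nrm b ^ (1 / p) + rpowNormSum p nrm l := by
  simp [rpowNormSum]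

end DecompositionCost

section SumBound

variable {A : Type*} [Ring A] [Algebra ℂ A] {p m : ℝ} {nrm : A → ℝ}

/-- Here `p`-homogeneity enters: a binomial coefficient `c` costs only `c ^ p`. -/
theorem nrm_mul_sum_pow_le (hp : 0 < p)
    (h_add : ∀ a b : A, nrm (a + b) ≤ nrm a + nrm b)
    (h_smul : ∀ (z : ℂ) (a : A), nrm (z • a) = ‖z‖ ^ p * nrm a)
    (h_mul : ∀ a b : A, nrm (a * b) ≤ nrm a * nrm b)
    (hcomm : ∀ x y : A, x * y = y * x) (l : List A) (a : A) (N : ℕ) :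
    nrm (a * l.sum ^ N) ≤ ((N : ℝ) + 1) ^ l.length * (rpowNormSum p nrm l ^ p) ^ N * nrm a := by
  have hnn := nrm_nonneg_of_add_le hp h_add h_smul
  induction l generalizing a N with
  | nil =>
    cases N <;> simp [rpowNormSum, Real.zero_rpow hp.ne', nrm_zero_of_smul hp h_smul]
  | cons b l ih =>
    have hq : (nrm b ^ (1 / p)) ^ p = nrm b := by rw [one_div, Real.rpow_inv_rpow (hnn b) hp.ne']
    set q := nrm b ^ (1 / p)
    set X := rpowNormSum p nrm l
    have hq0 : 0 ≤ q := Real.rpow_nonneg (hnn b) _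
    have hX0 : 0 ≤ X := rpowNormSum_nonneg hnn l
    have hterm : ∀ j ∈ range (N + 1), nrm (a * (b ^ j * l.sum ^ (N - j) * (N.choose j : A)))
        ≤ ((N : ℝ) + 1) ^ l.length * nrm a * (N.choose j * q ^ j * X ^ (N - j)) ^ p := by
      intro j hj
      have hjN : ((N - j : ℕ) : ℝ) + 1 ≤ N + 1 := by gcongr; exact_mod_cast Nat.sub_le N j
      rw [← mul_assoc, ← mul_assoc, nrm_mul_natCast h_smul, Real.mul_rpow (by positivity)
        (by positivity), Real.mul_rpow (by positivity) (by positivity),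
        ← Real.rpow_pow_comm hq0, ← Real.rpow_pow_comm hX0, hq]
      calc (N.choose j : ℝ) ^ p * nrm (a * b ^ j * l.sum ^ (N - j))
          ≤ (N.choose j : ℝ) ^ p *
              (((N : ℝ) + 1) ^ l.length * (X ^ p) ^ (N - j) * (nrm a * nrm b ^ j)) := by
            gcongr
            refine (ih _ _).trans ?_
            gcongr
            · exact hnn _
            · exact nrm_mul_pow_le hnn h_mul a b j
        _ = _ := by ring
    rw [List.sum_cons, (show Commute b l.sum from hcomm _ _).add_pow, mul_sum, rpowNormSum_cons]
    calc nrm (∑ j ∈ range (N + 1), a * (b ^ j * l.sum ^ (N - j) * (N.choose j : A)))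
        ≤ ∑ j ∈ range (N + 1),
            ((N : ℝ) + 1) ^ l.length * nrm a * (N.choose j * q ^ j * X ^ (N - j)) ^ p :=
          (le_sum_of_subadditive nrm (nrm_zero_of_smul hp h_smul).le h_add _ _).trans
            (sum_le_sum hterm)
      _ ≤ ((N : ℝ) + 1) ^ l.length * nrm a * ((N + 1) * ((q + X) ^ N) ^ p) := by
          rw [← mul_sum]
          gcongr
          · exact mul_nonneg (by positivity) (hnn a)
          · exact sum_choose_mul_rpow_le hq0 hX0 hp.le N
      _ = ((N : ℝ) + 1) ^ (b :: l).length * ((q + X) ^ p) ^ N * nrm a := by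
          rw [Real.rpow_pow_comm (by positivity), List.length_cons]
          ring

theorem nrm_sum_le_mul_rpowNormSum (hp : 0 < p) (hm : 0 < m)
    (h_add : ∀ a b : A, nrm (a + b) ≤ nrm a + nrm b)
    (h_smul : ∀ (z : ℂ) (a : A), nrm (z • a) = ‖z‖ ^ p * nrm a)
    (h_mul : ∀ a b : A, nrm (a * b) ≤ nrm a * nrm b)
    (h_sq : ∀ a : A, nrm a ^ 2 ≤ m * nrm (a ^ 2))
    (hcomm : ∀ x y : A, x * y = y * x) (l : List A) :
    nrm l.sum ≤ m * rpowNormSum p nrm l ^ p := by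
  have hnn := nrm_nonneg_of_add_le hp h_add h_smul
  refine nrm_le_of_pow_two_pow_le hm hnn h_sq (C := nrm 1) l.length
    (Real.rpow_nonneg (rpowNormSum_nonneg hnn l) p) (Eventually.of_forall fun k => ?_)
  have := nrm_mul_sum_pow_le hp h_add h_smul h_mul hcomm l 1 (2 ^ k)
  rw [one_mul] at this
  push_cast at this
  linarith

end SumBound

section SuppSeminorm

variable {A : Type*} [AddCommGroup A] {p : ℝ} {nrm : A → ℝ}

theorem suppSeminorm_nonneg (hnn : ∀ a, 0 ≤ nrm a) (a : A) : 0 ≤ suppSeminorm p nrm a :=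
  Real.sInf_nonneg fun _ ⟨l, _, _, hs⟩ => hs ▸ rpowNormSum_nonneg hnn l

theorem suppSeminorm_le_rpow (hnn : ∀ a, 0 ≤ nrm a) (a : A) :
    suppSeminorm p nrm a ≤ nrm a ^ (1 / p) :=
  csInf_le ⟨0, fun _ ⟨l, _, _, hs⟩ => hs ▸ rpowNormSum_nonneg hnn l⟩
    ⟨[a], by simp, by simp, by simp⟩

theorem le_mul_suppSeminorm {K c : ℝ} (hc : 0 < c) {b : A}
    (h : ∀ l : List A, l ≠ [] → l.sum = b → K ≤ c * rpowNormSum p nrm l) :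
    K ≤ c * suppSeminorm p nrm b := by
  rw [← div_le_iff₀' hc]
  refine le_csInf ⟨_, [b], by simp, by simp, rfl⟩ ?_
  rintro _ ⟨l, hl, hsum, rfl⟩
  rw [div_le_iff₀' hc]
  exact h l hl hsum

end SuppSeminorm

theorem stmt12_general {A : Type*} [Ring A] [Algebra ℂ A]
    {p : ℝ} (hp0 : 0 < p)
    (nrm : A → ℝ)
    (h_add : ∀ a b : A, nrm (a + b) ≤ nrm a + nrm b)
    (h_smul : ∀ (z : ℂ) (a : A), nrm (z • a) = ‖z‖ ^ p * nrm a)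
    (h_mul : ∀ a b : A, nrm (a * b) ≤ nrm a * nrm b)
    (h_zero : ∀ a : A, nrm a = 0 → a = 0)
    {m : ℝ} (hm : 0 < m)
    (h_sq : ∀ a : A, nrm a ^ 2 ≤ m * nrm (a ^ 2)) :
    ∀ a : A, suppSeminorm p nrm a ^ 2 ≤ m ^ (2 / p) * suppSeminorm p nrm (a ^ 2) := by
  intro a
  have hnn := nrm_nonneg_of_add_le hp0 h_add h_smul
  have hcomm := mul_comm_of_nrm_sq_le hp0 hm h_add h_smul h_mul h_zero h_sq
  refine le_mul_suppSeminorm (Real.rpow_pos_of_pos hm _) fun l _ hl => ?_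
  have hX := rpowNormSum_nonneg (p := p) hnn l
  calc suppSeminorm p nrm a ^ 2 ≤ (nrm a ^ (1 / p)) ^ 2 :=
        pow_le_pow_left₀ (suppSeminorm_nonneg hnn a) (suppSeminorm_le_rpow hnn a) 2
    _ = (nrm a ^ 2) ^ (1 / p) := Real.rpow_pow_comm (hnn a) _ 2
    _ ≤ (m * nrm (a ^ 2)) ^ (1 / p) := by gcongr; exact h_sq a
    _ ≤ (m * (m * rpowNormSum p nrm l ^ p)) ^ (1 / p) := by
        rw [← hl]
        gcongr
        · exact mul_nonneg hm.le (hnn _)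
        · exact nrm_sum_le_mul_rpowNormSum hp0 hm h_add h_smul h_mul h_sq hcomm l
    _ = m ^ (2 / p) * rpowNormSum p nrm l := by
        rw [← mul_assoc, Real.mul_rpow (by positivity) (by positivity), ← Real.rpow_mul hX,
          mul_one_div_cancel hp0.ne', Real.rpow_one, ← sq, ← Real.rpow_natCast,
          ← Real.rpow_mul hm.le]
        ring_nf

/-- If ‖a‖² ≤ m‖a²‖ on a complex p-normed algebra, then |a|² ≤ m^(2/p)·|a²| for the
support seminorm |·|. -/
theorem stmt12 {A : Type*} [Ring A] [Algebra ℂ A]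
    {p : ℝ} (hp0 : 0 < p) (hp1 : p ≤ 1)
    (nrm : A → ℝ)
    (h_add : ∀ a b : A, nrm (a + b) ≤ nrm a + nrm b)
    (h_smul : ∀ (z : ℂ) (a : A), nrm (z • a) = ‖z‖ ^ p * nrm a)
    (h_mul : ∀ a b : A, nrm (a * b) ≤ nrm a * nrm b)
    (h_zero : ∀ a : A, nrm a = 0 → a = 0)
    {m : ℝ} (hm : 0 < m)
    (h_sq : ∀ a : A, nrm a ^ 2 ≤ m * nrm (a ^ 2)) :
    ∀ a : A, suppSeminorm p nrm a ^ 2 ≤ m ^ (2 / p) * suppSeminorm p nrm (a ^ 2) :=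
  stmt12_general hp0 nrm h_add h_smul h_mul h_zero hm h_sq
end

section
/- Let A be an associative algebra (ring) and let q : A → ℝ be a nonnegative submultiplicative function (q(ab) ≤ q(a)q(b) for all a, b) satisfying the identity q(a)² = m·q(a²) for all a ∈ A, where m > 0 is a constant. Then for every a ∈ A, the sequence n ↦ q(aⁿ)^(1/n) converges to q(a)/m as n → ∞. -/
/-!
Put `p n = q(aⁿ) / m`. The hypotheses become `p (2n) = (p n)²` and
`p (j + k) ≤ m · p j · p k`. Squaring `t` times gives
`p (j + k) ^ 2ᵗ ≤ m · (p j · p k) ^ 2ᵗ`, and letting `t → ∞` removes the constant: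
`p` is submultiplicative. With `r = p 1` this gives `p n ≤ rⁿ`, while `p (2ⁿ) = r ^ 2ⁿ`
forces equality, since `r ^ 2ⁿ = p (2ⁿ) ≤ p n · p (2ⁿ - n) ≤ p n · r ^ (2ⁿ - n)`.
Hence `q(aⁿ) = m · rⁿ` for `n ≥ 1`, and `q(aⁿ)^(1/n) = m^(1/n) · r → r = q(a)/m`.
-/

open Filter Topology

lemma le_of_forall_pow_two_pow_le_mul {m X Y : ℝ} (hY : 0 ≤ Y)
    (h : ∀ t : ℕ, X ^ 2 ^ t ≤ m * Y ^ 2 ^ t) : X ≤ Y := by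
  by_contra! hYX
  have hXm : X ≤ m * Y := by simpa using h 0
  have hYpos : 0 < Y := by
    rcases hY.eq_or_lt with rfl | hYpos
    · linarith [mul_zero m]
    · exact hYpos
  obtain ⟨t, ht⟩ := pow_unbounded_of_one_lt m ((one_lt_div hYpos).mpr hYX)
  have hmono : (X / Y) ^ t ≤ (X / Y) ^ 2 ^ t :=
    pow_le_pow_right₀ ((one_lt_div hYpos).mpr hYX).le t.lt_two_pow_self.le
  have hbound : (X / Y) ^ 2 ^ t ≤ m := by
    rw [div_pow, div_le_iff₀ (by positivity)]
    exact h t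
  linarith

section SquaringSequence

variable {p : ℕ → ℝ}

lemma map_two_pow_mul (hsq : ∀ n, p (2 * n) = p n ^ 2) (t n : ℕ) :
    p (2 ^ t * n) = p n ^ 2 ^ t := by
  induction t with
  | zero => simp
  | succ t ih => rw [pow_succ', mul_assoc, hsq, ih, ← pow_mul']

lemma map_add_le_mul_of_le_const_mul (hp0 : ∀ n, 0 ≤ p n) (hsq : ∀ n, p (2 * n) = p n ^ 2)
    {m : ℝ} (hmul : ∀ j k, p (j + k) ≤ m * (p j * p k)) (j k : ℕ) :
    p (j + k) ≤ p j * p k := by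
  refine le_of_forall_pow_two_pow_le_mul (m := m) (mul_nonneg (hp0 j) (hp0 k)) fun t => ?_
  calc p (j + k) ^ 2 ^ t = p (2 ^ t * j + 2 ^ t * k) := by rw [← mul_add, map_two_pow_mul hsq]
    _ ≤ m * (p (2 ^ t * j) * p (2 ^ t * k)) := hmul _ _
    _ = m * (p j * p k) ^ 2 ^ t := by rw [map_two_pow_mul hsq, map_two_pow_mul hsq, mul_pow]

lemma le_pow_of_submultiplicative (hp0 : ∀ n, 0 ≤ p n)
    (hmul : ∀ j k, p (j + k) ≤ p j * p k) {n : ℕ} (hn : 1 ≤ n) : p n ≤ p 1 ^ n := by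
  induction n, hn using Nat.le_induction with
  | base => simp
  | succ n _ ih =>
    calc p (n + 1) ≤ p n * p 1 := hmul n 1
      _ ≤ p 1 ^ n * p 1 := mul_le_mul_of_nonneg_right ih (hp0 1)
      _ = p 1 ^ (n + 1) := (pow_succ _ _).symm

lemma eq_pow_of_submultiplicative (hp0 : ∀ n, 0 ≤ p n) (hsq : ∀ n, p (2 * n) = p n ^ 2)
    (hmul : ∀ j k, p (j + k) ≤ p j * p k) {n : ℕ} (hn : 1 ≤ n) : p n = p 1 ^ n := by
  have hle := le_pow_of_submultiplicative hp0 hmul hn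
  rcases (hp0 1).eq_or_lt with h0 | hpos
  · rw [← h0, zero_pow (by omega)] at hle ⊢
    exact le_antisymm hle (hp0 n)
  refine le_antisymm hle (le_of_mul_le_mul_right ?_ (pow_pos hpos (2 ^ n - n)))
  have hsplit : n + (2 ^ n - n) = 2 ^ n := by have := n.lt_two_pow_self; omega
  calc p 1 ^ n * p 1 ^ (2 ^ n - n) = p (2 ^ n * 1) := by
        rw [← pow_add, hsplit, map_two_pow_mul hsq]
    _ = p (n + (2 ^ n - n)) := by rw [mul_one, hsplit]
    _ ≤ p n * p (2 ^ n - n) := hmul _ _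
    _ ≤ p n * p 1 ^ (2 ^ n - n) :=
        mul_le_mul_of_nonneg_left
          (le_pow_of_submultiplicative hp0 hmul (by have := n.lt_two_pow_self; omega)) (hp0 n)

end SquaringSequence

lemma tendsto_rpow_inv_of_eventually_eq_mul_pow {u : ℕ → ℝ} {m r : ℝ} (hm : 0 < m)
    (hr : 0 ≤ r) (hu : ∀ᶠ n in atTop, u n = m * r ^ n) :
    Tendsto (fun n : ℕ => u n ^ (n : ℝ)⁻¹) atTop (𝓝 r) := by
  have hroot : Tendsto (fun n : ℕ => m ^ (n : ℝ)⁻¹) atTop (𝓝 1) := by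
    simpa using (tendsto_const_nhds (x := m)).rpow
      (tendsto_inv_atTop_zero.comp tendsto_natCast_atTop_atTop) (Or.inl hm.ne')
  have hlim : Tendsto (fun n : ℕ => m ^ (n : ℝ)⁻¹ * r) atTop (𝓝 r) := by
    simpa using hroot.mul_const r
  refine hlim.congr' ?_
  filter_upwards [hu, eventually_ne_atTop 0] with n hn hn0
  rw [hn, Real.mul_rpow hm.le (by positivity), ← Real.rpow_natCast, ← Real.rpow_mul hr,
    mul_inv_cancel₀ (Nat.cast_ne_zero.mpr hn0), Real.rpow_one]

/-- If q ≥ 0 is submultiplicative and satisfies q(a)² = m·q(a²), then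
q(aⁿ)^(1/n) → q(a)/m as n → ∞. -/
theorem stmt19 {A : Type*} [Ring A]
    (q : A → ℝ) (h_nonneg : ∀ a : A, 0 ≤ q a)
    (h_mul : ∀ a b : A, q (a * b) ≤ q a * q b)
    {m : ℝ} (hm : 0 < m)
    (h_sq : ∀ a : A, q a ^ 2 = m * q (a ^ 2)) :
    ∀ a : A, Filter.Tendsto (fun n : ℕ => q (a ^ n) ^ ((n : ℝ)⁻¹))
      Filter.atTop (nhds (q a / m)) := by
  intro a
  set p : ℕ → ℝ := fun n => q (a ^ n) / m with hp
  have hp0 : ∀ n, 0 ≤ p n := fun n => div_nonneg (h_nonneg _) hm.le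
  have hsq : ∀ n, p (2 * n) = p n ^ 2 := fun n => by
    simp only [hp, div_pow, pow_mul', h_sq]
    field_simp
  have hmul : ∀ j k, p (j + k) ≤ m * (p j * p k) := fun j k =>
    calc p (j + k) = q (a ^ j * a ^ k) / m := by simp only [hp, pow_add]
      _ ≤ q (a ^ j) * q (a ^ k) / m := by gcongr; exact h_mul _ _
      _ = m * (p j * p k) := by simp only [hp]; field_simp
  have hpow : ∀ n ≥ 1, q (a ^ n) = m * (q a / m) ^ n := fun n hn => by
    have := eq_pow_of_submultiplicative hp0 hsq (map_add_le_mul_of_le_const_mul hp0 hsq hmul) hn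
    simp only [hp, pow_one] at this
    rw [← this]
    field_simp
  exact tendsto_rpow_inv_of_eventually_eq_mul_pow hm (div_nonneg (h_nonneg a) hm.le)
    (eventually_atTop.mpr ⟨1, hpow⟩)
end
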